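/- Let F be a field, let x, y ∈ F with x ≠ y and xy ≠ 1, and suppose D₆, D₄, D₂, D₀ ∈ F satisfy: (i) x³y³D₆ + x²y²D₄ + xyD₂ + D₀ = 0; (ii) (x²y² + x²y + x²)D₆ + (xy + x)D₄ + D₂ = 0; (iii) (x²y² + xy² + y²)D₆ + (xy + y)D₄ + D₂ = 0; (iv) (x²y² + x²y + x² + xy² + y² + xy + x + y + 1)D₆ + (xy + x + y + 1)D₄ + D₂ = 0. Then D₆ = D₄ = D₂ = D₀ = 0. -/
import Mathlib


theorem stmt6 (F : Type*) [Field F] (x y : F) (hxy : x ≠ y) (hxy1 : x * y ≠ 1)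
    (D6 D4 D2 D0 : F)
    (h1 : x ^ 3 * y ^ 3 * D6 + x ^ 2 * y ^ 2 * D4 + x * y * D2 + D0 = 0)
    (h2 : (x ^ 2 * y ^ 2 + x ^ 2 * y + x ^ 2) * D6 + (x * y + x) * D4 + D2 = 0)
    (h3 : (x ^ 2 * y ^ 2 + x * y ^ 2 + y ^ 2) * D6 + (x * y + y) * D4 + D2 = 0)
    (h4 : (x ^ 2 * y ^ 2 + x ^ 2 * y + x ^ 2 + x * y ^ 2 + y ^ 2 + x * y + x + y + 1) * D6
        + (x * y + x + y + 1) * D4 + D2 = 0) :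
    D6 = 0 ∧ D4 = 0 ∧ D2 = 0 ∧ D0 = 0 := by
  have hsub : x - y ≠ 0 := sub_ne_zero.mpr hxy
  have hA : (x - y) * (D4 + (x * y + x + y) * D6) = 0 := by linear_combination h2 - h3
  have hD4 : D4 + (x * y + x + y) * D6 = 0 := by
    rcases mul_eq_zero.mp hA with h | h
    · exact absurd h hsub
    · exact h
  have e2 : D2 - x * y * (x + y + 1) * D6 = 0 := by
    linear_combination h2 - (x * y + x) * hD4
  have hkey : (1 - x * y) * D6 = 0 := by
    linear_combination h4 - (x * y + x + y + 1) * hD4 - e2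
  have hD6 : D6 = 0 := by
    rcases mul_eq_zero.mp hkey with h | h
    · exact absurd (by linear_combination -h) hxy1
    · exact h
  have hD4' : D4 = 0 := by rw [hD6] at hD4; simpa using hD4
  have hD2 : D2 = 0 := by rw [hD6] at e2; simpa using e2
  have hD0 : D0 = 0 := by rw [hD6, hD4', hD2] at h1; simpa using h1
  exact ⟨hD6, hD4', hD2, hD0⟩
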